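/- For a Hoffman graph 𝔥 and a positive real number m, the following conditions are equivalent: (i) 𝔥 has a representation of norm m; (ii) 𝔥 has a reduced representation of norm m; (iii) λ_min(𝔥) ≥ −m. -/

import Mathlib

attribute [local instance] Classical.propDecidable

open scoped RealInnerProductSpace

/-- A Hoffman graph: a graph together with a labeling of its vertices as fat or slim,
such that every fat vertex has a slim neighbor and fat vertices are pairwise nonadjacent. -/
structure HoffmanGraph (V : Type*) where
  graph : SimpleGraph V
  IsFat : V → Prop
  fat_not_adj : ∀ {x y : V}, IsFat x → IsFat y → ¬ graph.Adj x y
  fat_slim_nbr : ∀ {x : V}, IsFat x → ∃ y : V, ¬ IsFat y ∧ graph.Adj x y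

namespace HoffmanGraph

variable {V : Type*}

/-- A vertex is slim if it is not fat. -/
def IsSlim (H : HoffmanGraph V) (x : V) : Prop := ¬ H.IsFat x

/-- The type of slim vertices. -/
abbrev Slim (H : HoffmanGraph V) := {v : V // H.IsSlim v}

/-- The number of fat neighbors of a vertex. -/
noncomputable def fatDeg (H : HoffmanGraph V) (x : V) : ℕ :=
  {f : V | H.IsFat f ∧ H.graph.Adj x f}.ncard

/-- The number of common fat neighbors of two vertices. -/
noncomputable def commonFat (H : HoffmanGraph V) (x y : V) : ℕ :=
  {f : V | H.IsFat f ∧ H.graph.Adj x f ∧ H.graph.Adj y f}.ncard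

lemma commonFat_comm (H : HoffmanGraph V) (x y : V) :
    H.commonFat x y = H.commonFat y x := by
  unfold commonFat
  congr 1
  ext f
  simp only [Set.mem_setOf_eq]
  tauto

/-- A Hoffman graph is fat if every slim vertex has a fat neighbor. -/
def IsFatGraph (H : HoffmanGraph V) : Prop :=
  ∀ x, H.IsSlim x → ∃ f, H.IsFat f ∧ H.graph.Adj x f

/-- A representation of norm `m`. -/
def IsRep (H : HoffmanGraph V) (m : ℝ) {E : Type*} [NormedAddCommGroup E]
    [InnerProductSpace ℝ E] (φ : V → E) : Prop :=
  (∀ x, H.IsSlim x → ⟪φ x, φ x⟫ = m) ∧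
  (∀ x, H.IsFat x → ⟪φ x, φ x⟫ = 1) ∧
  (∀ x y, H.graph.Adj x y → ⟪φ x, φ y⟫ = 1) ∧
  (∀ x y, x ≠ y → ¬ H.graph.Adj x y → ⟪φ x, φ y⟫ = 0)

/-- A reduced representation of norm `m` (only the values on slim vertices matter). -/
def IsReducedRep (H : HoffmanGraph V) (m : ℝ) {E : Type*} [NormedAddCommGroup E]
    [InnerProductSpace ℝ E] (ψ : V → E) : Prop :=
  (∀ x, H.IsSlim x → ⟪ψ x, ψ x⟫ = m - H.fatDeg x) ∧
  (∀ x y, H.IsSlim x → H.IsSlim y → H.graph.Adj x y → ⟪ψ x, ψ y⟫ = 1 - H.commonFat x y) ∧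
  (∀ x y, H.IsSlim x → H.IsSlim y → x ≠ y → ¬ H.graph.Adj x y →
    ⟪ψ x, ψ y⟫ = - (H.commonFat x y : ℝ))

/-- The matrix B(𝔥) = A_s − C Cᵀ, indexed by the slim vertices. -/
noncomputable def matrixB (H : HoffmanGraph V) : Matrix H.Slim H.Slim ℝ :=
  fun x y => (if H.graph.Adj x.1 y.1 then (1 : ℝ) else 0) - (H.commonFat x.1 y.1 : ℝ)

/-- The smallest eigenvalue of a Hoffman graph. -/
noncomputable def lambdaMin (H : HoffmanGraph V) [Fintype V] : ℝ :=
  sInf (spectrum ℝ H.matrixB)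

/-- A subset of the vertices induces a Hoffman graph iff every fat vertex of it retains
a slim neighbor inside it. -/
def IsGoodSubset (H : HoffmanGraph V) (S : Set V) : Prop :=
  ∀ x ∈ S, H.IsFat x → ∃ y ∈ S, ¬ H.IsFat y ∧ H.graph.Adj x y

/-- The induced Hoffman subgraph on a good subset. -/
def induce (H : HoffmanGraph V) (S : Set V) (hS : H.IsGoodSubset S) : HoffmanGraph S where
  graph := H.graph.induce S
  IsFat := fun x => H.IsFat x.1
  fat_not_adj := by
    intro x y hx hy hadj
    exact H.fat_not_adj hx hy hadj
  fat_slim_nbr := by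
    rintro ⟨x, hxS⟩ hx
    obtain ⟨y, hyS, hy, hadj⟩ := hS x hxS hx
    exact ⟨⟨y, hyS⟩, hy, hadj⟩

/-- An (abstract) induced Hoffman subgraph relation between Hoffman graphs. -/
def IsInducedSubgraphOf {V₁ V₂ : Type*} (H₁ : HoffmanGraph V₁) (H₂ : HoffmanGraph V₂) : Prop :=
  ∃ e : V₁ ↪ V₂, (∀ x y, H₂.graph.Adj (e x) (e y) ↔ H₁.graph.Adj x y) ∧
    (∀ x, H₂.IsFat (e x) ↔ H₁.IsFat x)

/-- Isomorphism of Hoffman graphs. -/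
def IsIsoTo {V₁ V₂ : Type*} (H₁ : HoffmanGraph V₁) (H₂ : HoffmanGraph V₂) : Prop :=
  ∃ e : V₁ ≃ V₂, (∀ x y, H₂.graph.Adj (e x) (e y) ↔ H₁.graph.Adj x y) ∧
    (∀ x, H₂.IsFat (e x) ↔ H₁.IsFat x)

/-- `H` is the sum of its induced subgraphs on `W₁` and `W₂`. -/
structure IsSum (H : HoffmanGraph V) (W₁ W₂ : Set V) : Prop where
  nonempty₁ : W₁.Nonempty
  nonempty₂ : W₂.Nonempty
  good₁ : H.IsGoodSubset W₁
  good₂ : H.IsGoodSubset W₂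
  union_eq : W₁ ∪ W₂ = Set.univ
  slim_partition : ∀ v, H.IsSlim v → (v ∈ W₁ ↔ v ∉ W₂)
  fat_closed₁ : ∀ x ∈ W₁, H.IsSlim x → ∀ f, H.IsFat f → H.graph.Adj x f → f ∈ W₁
  fat_closed₂ : ∀ x ∈ W₂, H.IsSlim x → ∀ f, H.IsFat f → H.graph.Adj x f → f ∈ W₂
  common_le : ∀ x ∈ W₁, ∀ y ∈ W₂, H.IsSlim x → H.IsSlim y → H.commonFat x y ≤ 1
  common_iff : ∀ x ∈ W₁, ∀ y ∈ W₂, H.IsSlim x → H.IsSlim y →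
    (H.commonFat x y = 1 ↔ H.graph.Adj x y)

/-- `H` is decomposable if it is the sum of two nonempty induced Hoffman subgraphs. -/
def Decomposable (H : HoffmanGraph V) : Prop := ∃ W₁ W₂ : Set V, H.IsSum W₁ W₂

def Indecomposable (H : HoffmanGraph V) : Prop := ¬ H.Decomposable

/-- `H` is the sum of the family of its induced subgraphs on `W i`. -/
structure IsSumFamily (H : HoffmanGraph V) {n : ℕ} (W : Fin n → Set V) : Prop where
  nonempty : ∀ i, (W i).Nonempty
  good : ∀ i, H.IsGoodSubset (W i)
  union_eq : ⋃ i, W i = Set.univ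
  slim_mem_unique : ∀ v, H.IsSlim v → ∃! i, v ∈ W i
  fat_closed : ∀ i, ∀ x ∈ W i, H.IsSlim x → ∀ f, H.IsFat f → H.graph.Adj x f → f ∈ W i
  common_le : ∀ i j, i ≠ j → ∀ x ∈ W i, ∀ y ∈ W j, H.IsSlim x → H.IsSlim y →
    H.commonFat x y ≤ 1
  common_iff : ∀ i j, i ≠ j → ∀ x ∈ W i, ∀ y ∈ W j, H.IsSlim x → H.IsSlim y →
    (H.commonFat x y = 1 ↔ H.graph.Adj x y)

/-- Attach a new fat vertex (the `none` vertex) adjacent exactly to the slim vertices in `S`. -/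
def attachFat (H : HoffmanGraph V) (S : Set V) (hne : S.Nonempty)
    (hslim : ∀ v ∈ S, H.IsSlim v) : HoffmanGraph (Option V) where
  graph := {
    Adj := fun a b =>
      match a, b with
      | none, none => False
      | none, some v => v ∈ S
      | some v, none => v ∈ S
      | some u, some v => H.graph.Adj u v
    symm := by
      constructor
      rintro (_|u) (_|v) h
      · exact h.elim
      · exact h
      · exact h
      · exact h.symm
    loopless := by
      constructor
      rintro (_|u) h
      · exact h.elim
      · exact H.graph.irrefl h }
  IsFat := fun a => match a with | none => True | some v => H.IsFat v
  fat_not_adj := by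
    rintro (_|u) (_|v) hu hv h
    · exact h.elim
    · exact (hslim v h) hv
    · exact (hslim u h) hu
    · exact H.fat_not_adj hu hv h
  fat_slim_nbr := by
    rintro (_|u) hu
    · obtain ⟨s, hs⟩ := hne
      exact ⟨some s, hslim s hs, hs⟩
    · obtain ⟨y, hy, hadj⟩ := H.fat_slim_nbr hu
      exact ⟨some y, hy, hadj⟩

/-- `H` is `μ`-saturated: it has smallest eigenvalue at least `μ` and no fat vertex can be
attached while keeping the smallest eigenvalue at least `μ`. -/
def IsSaturated (H : HoffmanGraph V) [Fintype V] (μ : ℝ) : Prop :=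
  μ ≤ H.lambdaMin ∧
  ∀ (S : Set V) (hne : S.Nonempty) (hslim : ∀ v ∈ S, H.IsSlim v),
    ¬ (μ ≤ (H.attachFat S hne hslim).lambdaMin)

/-- The special graph `S⁻(𝔥)`: slim vertices, adjacent when the inner product of their
reduced representations is negative. -/
noncomputable def specialMinus (H : HoffmanGraph V) : SimpleGraph H.Slim where
  Adj x y := x ≠ y ∧
    ((H.graph.Adj x.1 y.1 ∧ (1 : ℝ) - (H.commonFat x.1 y.1 : ℝ) < 0) ∨
     (¬ H.graph.Adj x.1 y.1 ∧ -(H.commonFat x.1 y.1 : ℝ) < 0))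
  symm := by
    constructor
    rintro x y ⟨hne, h⟩
    refine ⟨hne.symm, ?_⟩
    rw [H.commonFat_comm y.1 x.1]
    rcases h with ⟨ha, hl⟩ | ⟨ha, hl⟩
    · exact Or.inl ⟨ha.symm, hl⟩
    · exact Or.inr ⟨fun hadj => ha hadj.symm, hl⟩
  loopless := ⟨fun x h => h.1 rfl⟩

/-- The special graph `S⁺(𝔥)`: slim vertices, adjacent when the inner product of their
reduced representations is positive. -/
noncomputable def specialPlus (H : HoffmanGraph V) : SimpleGraph H.Slim where
  Adj x y := x ≠ y ∧
    ((H.graph.Adj x.1 y.1 ∧ 0 < (1 : ℝ) - (H.commonFat x.1 y.1 : ℝ)) ∨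
     (¬ H.graph.Adj x.1 y.1 ∧ 0 < -(H.commonFat x.1 y.1 : ℝ)))
  symm := by
    constructor
    rintro x y ⟨hne, h⟩
    refine ⟨hne.symm, ?_⟩
    rw [H.commonFat_comm y.1 x.1]
    rcases h with ⟨ha, hl⟩ | ⟨ha, hl⟩
    · exact Or.inl ⟨ha.symm, hl⟩
    · exact Or.inr ⟨fun hadj => ha hadj.symm, hl⟩
  loopless := ⟨fun x h => h.1 rfl⟩

/-- The special graph `S(𝔥)`, the union of `S⁻(𝔥)` and `S⁺(𝔥)`. -/
noncomputable def special (H : HoffmanGraph V) : SimpleGraph H.Slim :=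
  H.specialMinus ⊔ H.specialPlus

/-- `⟨S⟩_𝔥`: the set `S` together with all fat neighbors of its members. -/
def closureSet (H : HoffmanGraph V) (S : Set V) : Set V :=
  S ∪ {f | H.IsFat f ∧ ∃ x ∈ S, H.graph.Adj x f}

/-- The Hoffman graph `𝔥^(t)` with one slim vertex (`none`) and `t` fat vertices. -/
def manyFat (t : ℕ) : HoffmanGraph (Option (Fin t)) where
  graph := {
    Adj := fun a b => (a = none ∧ b ≠ none) ∨ (a ≠ none ∧ b = none)
    symm := by
      constructor
      rintro a b (⟨h1, h2⟩ | ⟨h1, h2⟩)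
      · exact Or.inr ⟨h2, h1⟩
      · exact Or.inl ⟨h2, h1⟩
    loopless := by
      constructor
      rintro a (⟨h1, h2⟩ | ⟨h1, h2⟩)
      · exact h2 h1
      · exact h1 h2 }
  IsFat := fun a => a ≠ none
  fat_not_adj := by
    rintro a b ha hb (⟨h1, _⟩ | ⟨_, h1⟩)
    · exact ha h1
    · exact hb h1
  fat_slim_nbr := by
    intro a ha
    refine ⟨none, by simp, Or.inr ⟨ha, rfl⟩⟩

/-- An ordinary (slim) graph regarded as a Hoffman graph. -/
def ofSimple {W : Type*} (G : SimpleGraph W) : HoffmanGraph W where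
  graph := G
  IsFat := fun _ => False
  fat_not_adj := by intro x y hx _ _; exact hx
  fat_slim_nbr := by intro x hx; exact hx.elim

end HoffmanGraph
namespace HoffmanGraph

variable {V : Type*}

/-- The Hoffman graph obtained by replacing the fat vertices `f i` by slim cliques of
sizes `n i`, joining all neighbors of `f i` to all vertices of the `i`-th clique. -/
def blowup {k : ℕ} (H : HoffmanGraph V) (f : Fin k → V) (hf : ∀ i, H.IsFat (f i))
    (n : Fin k → ℕ) :
    HoffmanGraph ({v : V // v ∉ Set.range f} ⊕ (Σ i : Fin k, Fin (n i))) where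
  graph := {
    Adj := fun a b =>
      match a, b with
      | .inl u, .inl v => H.graph.Adj u.1 v.1
      | .inl u, .inr x => H.graph.Adj u.1 (f x.1)
      | .inr x, .inl v => H.graph.Adj (f x.1) v.1
      | .inr x, .inr y => x ≠ y ∧ x.1 = y.1
    symm := by
      constructor
      rintro (u|x) (v|y) h
      · exact h.symm
      · exact h.symm
      · exact h.symm
      · exact ⟨h.1.symm, h.2.symm⟩
    loopless := by
      constructor
      rintro (u|x) h
      · exact H.graph.irrefl h
      · exact h.1 rfl }
  IsFat := fun a => match a with | .inl u => H.IsFat u.1 | .inr _ => False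
  fat_not_adj := by
    rintro (u|x) (v|y) hu hv h
    · exact H.fat_not_adj hu hv h
    · exact hv
    · exact hu
    · exact hu
  fat_slim_nbr := by
    rintro (u|x) hu
    · obtain ⟨y, hy, hadj⟩ := H.fat_slim_nbr hu
      refine ⟨Sum.inl ⟨y, ?_⟩, hy, hadj⟩
      rintro ⟨i, rfl⟩
      exact hy (hf i)
    · exact hu.elim

/-- The slim graph obtained by replacing every fat vertex by a slim `n`-clique,
joining all neighbors of a fat vertex to all vertices of its clique. -/
def blowupAll (H : HoffmanGraph V) (n : ℕ) :
    HoffmanGraph (H.Slim ⊕ ({f : V // H.IsFat f} × Fin n)) where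
  graph := {
    Adj := fun a b =>
      match a, b with
      | .inl u, .inl v => H.graph.Adj u.1 v.1
      | .inl u, .inr x => H.graph.Adj u.1 x.1.1
      | .inr x, .inl v => H.graph.Adj x.1.1 v.1
      | .inr x, .inr y => x ≠ y ∧ x.1 = y.1
    symm := by
      constructor
      rintro (u|x) (v|y) h
      · exact h.symm
      · exact h.symm
      · exact h.symm
      · exact ⟨h.1.symm, h.2.symm⟩
    loopless := by
      constructor
      rintro (u|x) h
      · exact H.graph.irrefl h
      · exact h.1 rfl }
  IsFat := fun _ => False
  fat_not_adj := by intro x y hx _; exact hx.elim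
  fat_slim_nbr := by intro x hx; exact hx.elim

/-- The Hoffman graph of Example 4.2: slim vertices `ℤ/4ℤ` (the `inl`'s), fat vertices
`f_j` for `j ∈ ℤ/4ℤ` (the `inr`'s), with edges `{0,2}`, `{1,3}` and `{i, f_j}` for
`i = j` or `i = j + 1`. -/
def exampleA3tilde : HoffmanGraph (ZMod 4 ⊕ ZMod 4) where
  graph := {
    Adj := fun a b =>
      match a, b with
      | .inl i, .inl j => j = i + 2
      | .inl i, .inr j => i = j ∨ i = j + 1
      | .inr j, .inl i => i = j ∨ i = j + 1
      | .inr _, .inr _ => False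
    symm := by
      constructor
      have h4 : (2 : ZMod 4) + 2 = 0 := by decide
      rintro (i|i) (j|j) h
      · have h' : j = i + 2 := h
        subst h'
        show i = i + 2 + 2
        rw [add_assoc, h4, add_zero]
      · exact h
      · exact h
      · exact h.elim
    loopless := by
      constructor
      rintro (i|i) h
      · exact absurd (left_eq_add.mp h) (by decide)
      · exact h }
  IsFat := fun a => match a with | .inl _ => False | .inr _ => True
  fat_not_adj := by
    rintro (i|i) (j|j) hx hy h
    · exact hx
    · exact hx
    · exact hy
    · exact h
  fat_slim_nbr := by
    rintro (i|i) hx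
    · exact hx.elim
    · exact ⟨Sum.inl i, id, Or.inl rfl⟩

end HoffmanGraph

/-- The extended Dynkin graph `D̃₄`, i.e. the star `K_{1,4}`. -/
def tildeD4Graph : SimpleGraph (Fin 5) := SimpleGraph.fromRel (fun a _ => a = 0)

/-- The Dynkin graph `A_m`: the path on `m` vertices. -/
def dynkinA (m : ℕ) : SimpleGraph (Fin m) :=
  SimpleGraph.fromRel (fun i j => i.1 + 1 = j.1)

/-- The extended Dynkin graph `Ã_m`: the cycle on `m + 1` vertices. -/
def tildeA (m : ℕ) : SimpleGraph (ZMod (m + 1)) :=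
  SimpleGraph.fromRel (fun i j => i + 1 = j)

/-- The Dynkin graph `D_m`: the path `1 - 2 - ⋯ - (m-1)` with the extra vertex `0`
attached to the vertex `2`. -/
def dynkinD (m : ℕ) : SimpleGraph (Fin m) :=
  SimpleGraph.fromRel (fun i j => (1 ≤ i.1 ∧ i.1 + 1 = j.1) ∨ (i.1 = 0 ∧ j.1 = 2))

/-- The extended Dynkin graph `D̃_m` on `m + 1` vertices: the path `1 - 2 - ⋯ - (m-1)`
with the extra vertex `0` attached to `2` and the extra vertex `m` attached to `m - 2`. -/
def tildeD (m : ℕ) : SimpleGraph (Fin (m + 1)) :=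
  SimpleGraph.fromRel (fun i j =>
    (1 ≤ i.1 ∧ i.1 + 1 = j.1 ∧ j.1 ≤ m - 1) ∨ (i.1 = 0 ∧ j.1 = 2) ∨ (i.1 = m ∧ j.1 = m - 2))

/-! Both kinds of representation are Gram realisations: `φ` is a representation of norm `m`
iff its Gram matrix is `M = [[A_s + m I, C], [Cᵀ, I]]` (slim vertices first), and `ψ` is a
reduced one iff the Gram matrix of its slim part is `B + m I`. A real symmetric matrix has a
Gram realisation iff it is positive semidefinite; `M ⪰ 0` iff its Schur complement
`A_s + m I - C Cᵀ = B + m I` is; and `B + m I ⪰ 0` iff every eigenvalue of `B` is at least `-m`. -/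

open Matrix

section Gram

variable {ι : Type*} [Fintype ι]

theorem Matrix.PosSemidef.exists_gram_eq {M : Matrix ι ι ℝ} (hM : M.PosSemidef) :
    ∃ (d : ℕ) (v : ι → EuclideanSpace ℝ (Fin d)), gram ℝ v = M := by
  obtain ⟨d, u, rfl⟩ := posSemidef_iff_eq_sum_vecMulVec.mp hM
  refine ⟨d, fun j => WithLp.toLp 2 (fun k => u k j), ?_⟩
  ext i j
  simp [gram_apply, PiLp.inner_apply, Matrix.sum_apply, vecMulVec_apply, mul_comm]

theorem Matrix.posSemidef_iff_exists_gram_eq {M : Matrix ι ι ℝ} :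
    M.PosSemidef ↔ ∃ (d : ℕ) (v : ι → EuclideanSpace ℝ (Fin d)), gram ℝ v = M :=
  ⟨PosSemidef.exists_gram_eq, fun ⟨_, v, hv⟩ => hv ▸ posSemidef_gram ℝ v⟩

open scoped Pointwise in
theorem Matrix.IsHermitian.posSemidef_add_smul_one_iff [DecidableEq ι] {A : Matrix ι ι ℝ}
    (hA : A.IsHermitian) {m : ℝ} (hm : 0 ≤ m) :
    (A + m • 1).PosSemidef ↔ -m ≤ sInf (spectrum ℝ A) := by
  have hspec : spectrum ℝ (A + m • 1) = spectrum ℝ A + ({m} : Set ℝ) := by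
    rw [← Algebra.algebraMap_eq_smul_one, spectrum.add_singleton_eq]
  have hherm : (A + m • 1).IsHermitian := hA.add (isHermitian_one.smul (IsSelfAdjoint.all m))
  rw [posSemidef_iff_isHermitian_and_spectrum_nonneg, and_iff_right hherm, hspec,
    Set.add_singleton, Set.image_subset_iff]
  rcases (spectrum ℝ A).eq_empty_or_nonempty with hempty | hne
  · simp [hempty, hm]
  · rw [le_csInf_iff A.finite_real_spectrum.bddBelow hne]
    exact forall₂_congr fun μ _ => by simp [neg_le_iff_add_nonneg]

end Gram

namespace HoffmanGraph

variable {V : Type*} (H : HoffmanGraph V)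

theorem commonFat_self (x : V) : H.commonFat x x = H.fatDeg x := by
  simp only [commonFat, fatDeg, and_self]

theorem matrixB_isHermitian : H.matrixB.IsHermitian := by
  ext x y
  simp only [conjTranspose_apply, matrixB, star_trivial, H.commonFat_comm y.1 x.1,
    H.graph.adj_comm]

noncomputable def repGram (m : ℝ) : Matrix V V ℝ :=
  of fun x y => if x = y then (if H.IsFat x then 1 else m) else if H.graph.Adj x y then 1 else 0

variable {E : Type*} [NormedAddCommGroup E] [InnerProductSpace ℝ E] {m : ℝ}

theorem isRep_iff_gram_eq (φ : V → E) : H.IsRep m φ ↔ gram ℝ φ = H.repGram m := by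
  simp only [← Matrix.ext_iff, gram_apply, repGram, of_apply]
  constructor
  · rintro ⟨hslim, hfat, hadj, hnonadj⟩ x y
    rcases eq_or_ne x y with rfl | hne
    · rw [if_pos rfl]
      split_ifs with hx
      exacts [hfat x hx, hslim x hx]
    · rw [if_neg hne]
      split_ifs with hxy
      exacts [hadj x y hxy, hnonadj x y hne hxy]
  · intro h
    refine ⟨fun x hx => ?_, fun x hx => ?_, fun x y hxy => ?_, fun x y hne hxy => ?_⟩
    · rw [h, if_pos rfl, if_neg hx]
    · rw [h, if_pos rfl, if_pos hx]
    · rw [h, if_neg (H.graph.ne_of_adj hxy), if_pos hxy]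
    · rw [h, if_neg hne, if_neg hxy]

theorem isReducedRep_iff_gram_eq (ψ : V → E) :
    H.IsReducedRep m ψ ↔ gram ℝ (fun x : H.Slim => ψ x) = H.matrixB + m • 1 := by
  simp only [← Matrix.ext_iff, gram_apply, Matrix.add_apply, Matrix.smul_apply, one_apply,
    matrixB, smul_eq_mul, Subtype.forall, Subtype.mk.injEq]
  constructor
  · rintro ⟨hdiag, hadj, hnonadj⟩ x hx y hy
    rcases eq_or_ne x y with rfl | hne
    · rw [hdiag x hx, if_neg (H.graph.loopless.irrefl x), if_pos rfl, H.commonFat_self]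
      ring
    · rw [if_neg hne]
      split_ifs with hxy
      · rw [hadj x y hx hy hxy]
        ring
      · rw [hnonadj x y hx hy hne hxy]
        ring
  · intro h
    refine ⟨fun x hx => ?_, fun x y hx hy hxy => ?_, fun x y hx hy hne hxy => ?_⟩
    · rw [h x hx x hx, if_neg (H.graph.loopless.irrefl x), if_pos rfl, H.commonFat_self]
      ring
    · rw [h x hx y hy, if_pos hxy, if_neg (H.graph.ne_of_adj hxy)]
      ring
    · rw [h x hx y hy, if_neg hxy, if_neg hne]
      ring

noncomputable def slimAdjMatrix : Matrix H.Slim H.Slim ℝ :=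
  of fun x y => if H.graph.Adj x y then 1 else 0

noncomputable def fatIncidenceMatrix : Matrix H.Slim {v // ¬ H.IsSlim v} ℝ :=
  of fun x f => if H.graph.Adj x f then 1 else 0

theorem commonFat_eq_card [Fintype V] (x y : V) :
    H.commonFat x y =
      Fintype.card {f : {v // ¬ H.IsSlim v} // H.graph.Adj x f ∧ H.graph.Adj y f} := by
  rw [commonFat, ← Nat.card_coe_set_eq, ← Nat.card_eq_fintype_card]
  exact Nat.card_congr <| ((Equiv.subtypeSubtypeEquivSubtypeInter (¬ H.IsSlim ·)
    fun f => H.graph.Adj x f ∧ H.graph.Adj y f).trans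
      (Equiv.subtypeEquivRight fun f => by simp [IsSlim])).symm

theorem matrixB_eq_slimAdjMatrix_sub [Fintype V] :
    H.matrixB = H.slimAdjMatrix - H.fatIncidenceMatrix * H.fatIncidenceMatrixᴴ := by
  ext x y
  simp [matrixB, slimAdjMatrix, fatIncidenceMatrix, mul_apply, ← ite_and, Finset.sum_boole,
    commonFat_eq_card, Fintype.card_subtype, and_comm]

theorem repGram_submatrix_sumCompl :
    (H.repGram m).submatrix (Equiv.sumCompl H.IsSlim) (Equiv.sumCompl H.IsSlim) =
      fromBlocks (H.slimAdjMatrix + m • 1) H.fatIncidenceMatrix H.fatIncidenceMatrixᴴ 1 := by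
  ext (x | f) (y | g)
  · rcases eq_or_ne x y with rfl | hne
    · simp [repGram, slimAdjMatrix, show ¬ H.IsFat x from x.2]
    · simp [repGram, slimAdjMatrix, hne, Subtype.val_injective.ne hne]
  · have : (x : V) ≠ g := fun h => g.2 (h ▸ x.2)
    simp [repGram, fatIncidenceMatrix, this]
  · have : (f : V) ≠ y := fun h => f.2 (h ▸ y.2)
    simp [repGram, fatIncidenceMatrix, this, H.graph.adj_comm]
  · rcases eq_or_ne f g with rfl | hne
    · simp [repGram, not_not.mp f.2]
    · simp [repGram, hne, Subtype.val_injective.ne hne,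
        H.fat_not_adj (not_not.mp f.2) (not_not.mp g.2)]

theorem posSemidef_repGram_iff [Fintype V] :
    (H.repGram m).PosSemidef ↔ (H.matrixB + m • 1).PosSemidef := by
  let _ : Invertible (1 : Matrix {v // ¬ H.IsSlim v} {v // ¬ H.IsSlim v} ℝ) := invertibleOne
  rw [← posSemidef_submatrix_equiv (Equiv.sumCompl H.IsSlim), repGram_submatrix_sumCompl,
    PosDef.fromBlocks₂₂ _ _ PosDef.one, inv_one, Matrix.mul_one, matrixB_eq_slimAdjMatrix_sub,
    sub_add_eq_add_sub]

theorem exists_isRep_iff_posSemidef [Fintype V] :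
    (∃ (d : ℕ) (φ : V → EuclideanSpace ℝ (Fin d)), H.IsRep m φ) ↔ (H.repGram m).PosSemidef := by
  simp only [isRep_iff_gram_eq, posSemidef_iff_exists_gram_eq]

theorem exists_isReducedRep_iff_posSemidef [Fintype V] :
    (∃ (d : ℕ) (ψ : V → EuclideanSpace ℝ (Fin d)), H.IsReducedRep m ψ) ↔
      (H.matrixB + m • 1).PosSemidef := by
  simp only [isReducedRep_iff_gram_eq, posSemidef_iff_exists_gram_eq]
  constructor
  · rintro ⟨d, ψ, h⟩
    exact ⟨d, _, h⟩
  · rintro ⟨d, w, h⟩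
    refine ⟨d, fun v => if hv : H.IsSlim v then w ⟨v, hv⟩ else 0, ?_⟩
    convert h using 2
    exact funext fun x => dif_pos x.2

end HoffmanGraph

/-- Theorem 2.8: for a Hoffman graph `𝔥` and a positive real `m`, the following are
equivalent: (i) `𝔥` has a representation of norm `m`; (ii) `𝔥` has a reduced
representation of norm `m`; (iii) `λ_min(𝔥) ≥ -m`. -/
theorem representation_iff_reduced_representation_iff_lambdaMin_ge
    {V : Type} [Fintype V] (H : HoffmanGraph V) (m : ℝ) (hm : 0 < m) :
    ((∃ (d : ℕ) (φ : V → EuclideanSpace ℝ (Fin d)), H.IsRep m φ) ↔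
      (∃ (d : ℕ) (ψ : V → EuclideanSpace ℝ (Fin d)), H.IsReducedRep m ψ)) ∧
    ((∃ (d : ℕ) (ψ : V → EuclideanSpace ℝ (Fin d)), H.IsReducedRep m ψ) ↔
      -m ≤ H.lambdaMin) := by
  rw [H.exists_isRep_iff_posSemidef, H.posSemidef_repGram_iff,
    H.exists_isReducedRep_iff_posSemidef, HoffmanGraph.lambdaMin,
    H.matrixB_isHermitian.posSemidef_add_smul_one_iff hm.le]
  exact ⟨Iff.rfl, Iff.rfl⟩
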